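/- Let k be a field of characteristic 2 and r ≥ 2. The k-algebra homomorphism τ from k[u_3,u_5,…,u_{2r−1}, t_1,…,t_r] to k[x_1,…,x_{r−1}, t_1,…,t_r] which is the identity on the t_i and sends u_{2a+1} (for 1 ≤ a ≤ r−1) to ∑_{j=1}^{r−1} x_j (t_j + t_r) · e_{a−1}(t_1,…,\hat{t_j},…,t_{r−1}) is injective. -/

import Mathlib

/-!
Write `K = Frac k[t]`. Through `k[x, t] ≅ (k[t])[x] ⊆ K[x]`, the map `τ` becomes the linear
substitution `x ↦ A x` with `A b j = (t_j + t_r) e_b(t_1, …, t̂_j, …, t_{r-1})`, so it suffices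
that `det A ≠ 0`. Now `A = E · diag(t_j + t_r)` where `E b j = e_b(t̂_j)`, and multiplying `E`
by the Vandermonde-type matrix `V l b = t_l ^ (r - 2 - b)` gives `∏_{i ≠ j} (t_i + t_l)` in
entry `(l, j)`; in characteristic 2 this vanishes for `l ≠ j`, so `det V · det E` is a product
of the nonzero `t_i + t_j`.
-/

open MvPolynomial Finset Matrix

lemma Finset.prod_add_eq_sum_pow_mul_esymm {R ι : Type*} [CommSemiring R] [DecidableEq ι]
    (s : Finset ι) (t : ι → R) (z : R) :
    ∏ i ∈ s, (t i + z) =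
      ∑ a ∈ range (#s + 1), z ^ (#s - a) * ∑ S ∈ powersetCard a s, ∏ i ∈ S, t i := by
  rw [prod_add, sum_powerset]
  refine sum_congr rfl fun a _ => ?_
  rw [mul_sum]
  refine sum_congr rfl fun S hS => ?_
  rw [mem_powersetCard] at hS
  rw [prod_const, card_sdiff_of_subset hS.1, hS.2, mul_comm]

section CharTwo

variable {R : Type*} [CommRing R] {n : ℕ}

def esymmComplMatrix (u : Fin n → R) : Matrix (Fin n) (Fin n) R :=
  of fun a j => ∑ S ∈ powersetCard a (univ.erase j), ∏ i ∈ S, u i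

lemma vandermonde_mul_esymmComplMatrix [CharP R 2] (u : Fin n → R) :
    of (fun l a : Fin n => u l ^ (n - 1 - a)) * esymmComplMatrix u =
      diagonal fun j => ∏ i ∈ univ.erase j, (u i + u j) := by
  ext l j
  have hcard : #(univ.erase j) = n - 1 := by simp
  have hentry : (of (fun l a : Fin n => u l ^ (n - 1 - a)) * esymmComplMatrix u) l j =
      ∏ i ∈ univ.erase j, (u i + u l) := by
    rw [prod_add_eq_sum_pow_mul_esymm, hcard, Nat.sub_add_cancel (Fin.pos j),
      ← Fin.sum_univ_eq_sum_range]
    rfl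
  rw [hentry]
  obtain rfl | hlj := eq_or_ne l j
  · rw [diagonal_apply_eq]
  · rw [diagonal_apply_ne _ hlj]
    exact prod_eq_zero (mem_erase.mpr ⟨hlj, mem_univ l⟩) (CharTwo.add_self_eq_zero _)

variable [IsDomain R] [CharP R 2]

lemma det_esymmComplMatrix_ne_zero {u : Fin n → R} (hu : Function.Injective u) :
    (esymmComplMatrix u).det ≠ 0 := by
  have h := congrArg det (vandermonde_mul_esymmComplMatrix u)
  rw [det_mul, det_diagonal] at h
  refine right_ne_zero_of_mul (h ▸ prod_ne_zero_iff.mpr fun j _ => prod_ne_zero_iff.mpr ?_)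
  intro i hi
  exact CharTwo.add_eq_zero.not.mpr (hu.ne (mem_erase.mp hi).1)

lemma det_esymmComplMatrix_mul_diagonal_ne_zero {u : Fin n → R} {z : R}
    (hu : Function.Injective u) (hz : ∀ j, u j ≠ z) :
    (esymmComplMatrix u * diagonal fun j => u j + z).det ≠ 0 := by
  rw [det_mul, det_diagonal]
  exact mul_ne_zero (det_esymmComplMatrix_ne_zero hu)
    (prod_ne_zero_iff.mpr fun j _ => CharTwo.add_eq_zero.not.mpr (hz j))

end CharTwo

namespace MvPolynomial

section LinearSubst

variable {R S : Type*} [CommRing R] [CommRing S] {σ : Type*} [Fintype σ]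

noncomputable def linearSubst (A : Matrix σ σ R) : MvPolynomial σ R →ₐ[R] MvPolynomial σ R :=
  aeval fun b => ∑ j, C (A b j) * X j

@[simp]
lemma linearSubst_X (A : Matrix σ σ R) (b : σ) :
    linearSubst A (X b) = ∑ j, C (A b j) * X j :=
  aeval_X _ _

@[simp]
lemma linearSubst_C (A : Matrix σ σ R) (a : R) : linearSubst A (C a) = C a :=
  aeval_C _ _

lemma linearSubst_comp (A B : Matrix σ σ R) :
    (linearSubst A).comp (linearSubst B) = linearSubst (B * A) := by
  refine algHom_ext fun b => ?_
  simp only [AlgHom.comp_apply, linearSubst_X, map_sum, map_mul, linearSubst_C, mul_apply,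
    mul_sum, sum_mul]
  rw [sum_comm]
  simp only [mul_assoc]

lemma linearSubst_one [DecidableEq σ] : linearSubst (1 : Matrix σ σ R) = AlgHom.id R _ := by
  refine algHom_ext fun b => ?_
  simp [one_apply, apply_ite C, ite_mul]

lemma linearSubst_injective_of_isUnit_det [DecidableEq σ] {A : Matrix σ σ R}
    (hA : IsUnit A.det) : Function.Injective (linearSubst A) := by
  have h : (linearSubst A⁻¹).comp (linearSubst A) = AlgHom.id R _ := by
    rw [linearSubst_comp, mul_nonsing_inv A hA, linearSubst_one]
  exact Function.LeftInverse.injective (f := linearSubst A) (g := linearSubst A⁻¹)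
    fun p => by simpa using AlgHom.congr_fun h p

lemma map_linearSubst (f : R →+* S) (A : Matrix σ σ R) (p : MvPolynomial σ R) :
    map f (linearSubst A p) = linearSubst (A.map f) (map f p) := by
  induction p using MvPolynomial.induction_on with
  | C a => simp
  | add p q hp hq => simp only [map_add, hp, hq]
  | mul_X p b hp => simp [hp]

lemma linearSubst_injective_of_det_ne_zero [IsDomain R] [DecidableEq σ] {A : Matrix σ σ R}
    (hA : A.det ≠ 0) : Function.Injective (linearSubst A) := by
  let f := algebraMap R (FractionRing R)
  have hf : Function.Injective f := IsFractionRing.injective R (FractionRing R)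
  have hAf : IsUnit (A.map f).det := by
    rw [← RingHom.mapMatrix_apply, ← f.map_det]
    exact (map_ne_zero_iff f hf).mpr hA |>.isUnit
  refine Function.Injective.of_comp (f := map f) fun p q h => ?_
  simp only [Function.comp_apply, map_linearSubst] at h
  exact map_injective f hf (linearSubst_injective_of_isUnit_det hAf h)

end LinearSubst

/-- Under `sumAlgEquiv : k[σ ⊕ ι] ≃ (k[ι])[σ]` this map is `linearSubst A`. -/
lemma aeval_sum_elim_linear_injective {k : Type*} [CommRing k] [IsDomain k]
    {σ ι : Type*} [Fintype σ] [DecidableEq σ] {A : Matrix σ σ (MvPolynomial ι k)}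
    (hA : A.det ≠ 0) :
    Function.Injective (aeval (Sum.elim (fun b => ∑ j, X (Sum.inl j) * rename Sum.inr (A b j))
      (fun i => X (Sum.inr i))) : MvPolynomial (σ ⊕ ι) k →ₐ[k] MvPolynomial (σ ⊕ ι) k) := by
  set τ : MvPolynomial (σ ⊕ ι) k →ₐ[k] MvPolynomial (σ ⊕ ι) k := aeval _
  let e := sumAlgEquiv k σ ι
  have he_rename (p : MvPolynomial ι k) : e (rename Sum.inr p) = C p :=
    AlgHom.congr_fun (sumAlgEquiv_comp_rename_inr k σ ι) p
  have hX : ∀ v, e (τ (X v)) = linearSubst A (e (X v)) := by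
    rintro (b | i)
    · simp [τ, e, he_rename, mul_comm]
    · simp [τ, e]
  have hconj (p : MvPolynomial (σ ⊕ ι) k) : e (τ p) = linearSubst A (e p) := by
    induction p using MvPolynomial.induction_on with
    | C a => simp [τ, e]
    | add p q hp hq => simp only [map_add, hp, hq]
    | mul_X p v hp => simp only [map_mul, hp, hX]
  refine Function.Injective.of_comp (f := e) fun p q h => ?_
  simp only [Function.comp_apply, hconj] at h
  exact e.injective (linearSubst_injective_of_det_ne_zero hA h)

end MvPolynomial

/-- Let `k` be a field of characteristic 2 and `r ≥ 2`. The
`k`-algebra homomorphism `τ : k[u₃,u₅,…,u_{2r−1}, t₁,…,t_r] → k[x₁,…,x_{r−1}, t₁,…,t_r]`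
which is the identity on the `t_i` and sends `u_{2a+1}` (for `1 ≤ a ≤ r−1`) to
`∑_{j=1}^{r−1} x_j (t_j + t_r) · e_{a−1}(t₁,…,t̂_j,…,t_{r−1})` is injective.
Here `Sum.inl b` (for `b : Fin (r-1)`) indexes `u_{2(b+1)+1}` in the source and
`x_{b+1}` in the target, and `Sum.inr i` indexes `t_{i+1}`. -/
theorem tau_substitution_injective
    (k : Type*) [Field k] [CharP k 2] (r : ℕ) (hr : 2 ≤ r) :
    Function.Injective
      (MvPolynomial.aeval
        (fun v : Fin (r - 1) ⊕ Fin r =>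
          match v with
          | Sum.inl b =>
              ∑ j : Fin (r - 1),
                X (Sum.inl j) *
                  (X (Sum.inr (Fin.castLE (Nat.sub_le r 1) j)) +
                    X (Sum.inr (⟨r - 1, by omega⟩ : Fin r))) *
                  ∑ s ∈ Finset.powersetCard (b : ℕ)
                      ((Finset.univ : Finset (Fin (r - 1))).erase j),
                    ∏ i ∈ s, X (Sum.inr (Fin.castLE (Nat.sub_le r 1) i))
          | Sum.inr i => X (Sum.inr i)) :
        MvPolynomial (Fin (r - 1) ⊕ Fin r) k →ₐ[k]
          MvPolynomial (Fin (r - 1) ⊕ Fin r) k) := by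
  set last : Fin r := ⟨r - 1, by omega⟩
  set u : Fin (r - 1) → MvPolynomial (Fin r) k := fun j => X (Fin.castLE (Nat.sub_le r 1) j)
  have hu : Function.Injective u := X_injective.comp (Fin.castLE_injective _)
  have hlast (j : Fin (r - 1)) : u j ≠ X last := fun h => by
    have := congrArg Fin.val (X_injective h)
    simp [last] at this
    omega
  convert aeval_sum_elim_linear_injective (det_esymmComplMatrix_mul_diagonal_ne_zero hu hlast)
    using 3
  · rfl -- the `CommSemiring k` instances coming from `Field k` and from `CommRing k`
  funext v
  rcases v with b | i
  · simp [u, esymmComplMatrix, mul_diagonal, mul_comm, mul_assoc]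
  · rfl
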